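/- For arbitrary positive costs c, the minimum expected evaluation cost of the unanimous vote function u satisfies OPT(u) = min over i ∈ Fin n of [ c i + (1 − p i)·A_i + p i·B_i ], where, listing the indices other than i as j₁,…,j_{n−1} in nondecreasing order of c j / p j, A_i = Σ_{t=1}^{n−1} c(j_t)·∏_{s<t} (1 − p(j_s)), and, listing the indices other than i as j'₁,…,j'_{n−1} in nondecreasing order of c j / (1 − p j), B_i = Σ_{t=1}^{n−1} c(j'_t)·∏_{s<t} p(j'_s). That is, an optimal adaptive strategy queries some first bit i, then queries the remaining bits in nondecreasing c/p order until a true bit is found if bit i was false, and in nondecreasing c/(1−p) order until a false bit is found if bit i was true. -/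

import Mathlib

open Finset

/-- Number of true bits of an assignment. -/
def N1 {n : ℕ} (a : Fin n → Bool) : ℕ :=
  (Finset.univ.filter (fun i => a i = true)).card

/-- Probability of an assignment. -/
noncomputable def pr {n : ℕ} (p : Fin n → ℝ) (a : Fin n → Bool) : ℝ :=
  ∏ i, if a i then p i else 1 - p i
/-- Binary decision trees over `n` bits, with natural-number leaf labels. -/
inductive DTree (n : ℕ) : Type where
  | leaf : ℕ → DTree n
  | node : Fin n → DTree n → DTree n → DTree n

namespace DTree

/-- Output of the tree on assignment `a`. -/
def eval {n : ℕ} : DTree n → (Fin n → Bool) → ℕ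
  | .leaf v, _ => v
  | .node i t0 t1, a => if a i then eval t1 a else eval t0 a

/-- Total cost of the queries made on assignment `a`. -/
noncomputable def cost {n : ℕ} (c : Fin n → ℝ) : DTree n → (Fin n → Bool) → ℝ
  | .leaf _, _ => 0
  | .node i t0 t1, a => c i + (if a i then cost c t1 a else cost c t0 a)

/-- The list of indices queried on assignment `a`, in order. -/
def path {n : ℕ} : DTree n → (Fin n → Bool) → List (Fin n)
  | .leaf _, _ => []
  | .node i t0 t1, a => i :: (if a i then path t1 a else path t0 a)

/-- No index occurs twice on any root-to-leaf path (given already-used indices). -/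
def Proper {n : ℕ} : DTree n → Finset (Fin n) → Prop
  | .leaf _, _ => True
  | .node i t0 t1, used =>
      i ∉ used ∧ Proper t0 (insert i used) ∧ Proper t1 (insert i used)

/-- Every root-to-leaf path queries all `n` indices (and no repeats). -/
def Full {n : ℕ} : DTree n → Finset (Fin n) → Prop
  | .leaf _, used => used = Finset.univ
  | .node i t0 t1, used =>
      i ∉ used ∧ Full t0 (insert i used) ∧ Full t1 (insert i used)

end DTree
/-- Expected-cost-minimizing value over all decision trees evaluating `h`. -/
noncomputable def OPTcost {n : ℕ} (p c : Fin n → ℝ) (h : (Fin n → Bool) → ℕ) : ℝ :=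
  sInf {x : ℝ | ∃ T : DTree n, T.Proper ∅ ∧ (∀ a, T.eval a = h a) ∧
    x = ∑ a : Fin n → Bool, T.cost c a * pr p a}

/-- `chainCost c q [j₁,…,jₘ] = Σ_t c jₜ · Π_{s<t} q jₛ`: expected cost of querying the
listed bits in order, continuing past each bit with probability `q` of that bit. -/
noncomputable def chainCost {n : ℕ} (c q : Fin n → ℝ) : List (Fin n) → ℝ
  | [] => 0
  | i :: l => c i + q i * chainCost c q l

/-- The unanimous vote function: 2 if all bits true, 0 if all false, 1 otherwise. -/
def uvote {n : ℕ} (a : Fin n → Bool) : ℕ :=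
  if ∀ i, a i = true then 2 else if ∀ i, a i = false then 0 else 1


/-!
An optimal tree for `uvote` has some root `i`. Once bit `i` is known to be `b`, the tree still
has to certify that all other bits equal `b` or find one that does not: this is the problem of
evaluating an AND/OR of independent bits, for which querying in order of `c / Pr(bit ≠ b)`
is optimal by the classical exchange argument. Both bounds are proved by induction on trees,
the lower one using that the expected cost of a node is `c i` plus the two subtree costs
weighted by `1 - p i` and `p i`, because no subtree queries `i` again.
-/

open Function

variable {n : ℕ}

/-- `pr p a = ∏ i, bitProb p i (a i)` holds definitionally. -/
noncomputable def bitProb (p : Fin n → ℝ) (i : Fin n) (b : Bool) : ℝ :=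
  if b then p i else 1 - p i

noncomputable def expCost (p c : Fin n → ℝ) (T : DTree n) : ℝ :=
  ∑ a : Fin n → Bool, T.cost c a * pr p a

section Probability

variable (p : Fin n → ℝ)

lemma bitProb_nonneg {p : Fin n → ℝ} (hp : ∀ i, p i ∈ Set.Icc 0 1) (i : Fin n) (b : Bool) :
    0 ≤ bitProb p i b := by
  cases b <;> simp [bitProb, (hp i).1, (hp i).2]

lemma one_sub_bitProb (i : Fin n) (b : Bool) : 1 - bitProb p i b = bitProb p i (!b) := by
  cases b <;> simp [bitProb]

lemma sum_bitProb (i : Fin n) : ∑ b, bitProb p i b = 1 := by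
  simp [bitProb]

lemma pr_nonneg {p : Fin n → ℝ} (hp : ∀ i, p i ∈ Set.Icc 0 1) (a : Fin n → Bool) :
    0 ≤ pr p a :=
  Finset.prod_nonneg fun i _ => bitProb_nonneg hp i (a i)

lemma sum_pr : ∑ a : Fin n → Bool, pr p a = 1 :=
  (Fintype.prod_sum fun i b => bitProb p i b).symm.trans (prod_eq_one fun i _ => sum_bitProb p i)

lemma pr_update_mul (a : Fin n → Bool) (i : Fin n) (b : Bool) :
    pr p (update a i b) * bitProb p i (a i) = pr p a * bitProb p i b := by
  have split : ∀ x : Fin n → Bool,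
      pr p x = bitProb p i (x i) * ∏ j ∈ univ.erase i, bitProb p j (x j) :=
    fun x => (mul_prod_erase univ (fun j => bitProb p j (x j)) (mem_univ i)).symm
  rw [split, split a, update_self,
    prod_congr rfl fun j hj => by rw [update_of_ne (ne_of_mem_erase hj)]]
  ring

/-- Resampling bit `i` independently does not change an expectation. -/
lemma sum_mul_pr_eq_sum_bitProb_mul (i : Fin n) (F : (Fin n → Bool) → ℝ) :
    ∑ a, F a * pr p a = ∑ b, bitProb p i b * ∑ a, F (update a i b) * pr p a := by
  have swap : Involutive fun x : (Fin n → Bool) × Bool => (update x.1 i x.2, x.1 i) :=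
    fun x => by simp
  calc ∑ a, F a * pr p a
      = ∑ x : (Fin n → Bool) × Bool, F x.1 * pr p x.1 * bitProb p i x.2 := by
        simp only [Fintype.sum_prod_type, ← mul_sum, sum_bitProb, mul_one]
    _ = ∑ x : (Fin n → Bool) × Bool, F (update x.1 i x.2) * (pr p x.1 * bitProb p i x.2) :=
        Fintype.sum_bijective _ swap.bijective _ _ fun x => by
          simp only [mul_assoc, pr_update_mul, update_idem, update_eq_self]
    _ = ∑ b, bitProb p i b * ∑ a, F (update a i b) * pr p a := by
        rw [Fintype.sum_prod_type, sum_comm]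
        simp only [mul_sum]
        exact sum_congr rfl fun b _ => sum_congr rfl fun a _ => by ring

end Probability

namespace DTree

lemma eval_update_of_mem {t : DTree n} {s : Finset (Fin n)} (ht : t.Proper s) {i : Fin n}
    (hi : i ∈ s) (a : Fin n → Bool) (b : Bool) : t.eval (update a i b) = t.eval a := by
  induction t generalizing s with
  | leaf => rfl
  | node j t0 t1 ih0 ih1 =>
    obtain ⟨hj, h0, h1⟩ := ht
    have hji : j ≠ i := by rintro rfl; exact hj hi
    simp only [eval, update_of_ne hji, ih0 h0 (mem_insert_of_mem hi), ih1 h1 (mem_insert_of_mem hi)]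

lemma cost_update_of_mem (c : Fin n → ℝ) {t : DTree n} {s : Finset (Fin n)} (ht : t.Proper s)
    {i : Fin n} (hi : i ∈ s) (a : Fin n → Bool) (b : Bool) :
    t.cost c (update a i b) = t.cost c a := by
  induction t generalizing s with
  | leaf => rfl
  | node j t0 t1 ih0 ih1 =>
    obtain ⟨hj, h0, h1⟩ := ht
    have hji : j ≠ i := by rintro rfl; exact hj hi
    simp only [cost, update_of_ne hji, ih0 h0 (mem_insert_of_mem hi), ih1 h1 (mem_insert_of_mem hi)]

lemma eval_branch {i : Fin n} {t0 t1 : DTree n} {s : Finset (Fin n)}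
    (ht : (node i t0 t1).Proper s) (a : Fin n → Bool) (b : Bool) :
    (bif b then t1 else t0).eval a = (node i t0 t1).eval (update a i b) := by
  obtain ⟨-, h0, h1⟩ := ht
  cases b <;> simp [eval, eval_update_of_mem h0 (mem_insert_self i s),
    eval_update_of_mem h1 (mem_insert_self i s)]

lemma cost_branch (c : Fin n → ℝ) {i : Fin n} {t0 t1 : DTree n} {s : Finset (Fin n)}
    (ht : (node i t0 t1).Proper s) (a : Fin n → Bool) (b : Bool) :
    (node i t0 t1).cost c (update a i b) = c i + (bif b then t1 else t0).cost c a := by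
  obtain ⟨-, h0, h1⟩ := ht
  cases b <;> simp [cost, cost_update_of_mem c h0 (mem_insert_self i s),
    cost_update_of_mem c h1 (mem_insert_self i s)]

lemma cost_nonneg {c : Fin n → ℝ} (hc : ∀ i, 0 ≤ c i) (t : DTree n) (a : Fin n → Bool) :
    0 ≤ t.cost c a := by
  induction t with
  | leaf => exact le_rfl
  | node i t0 t1 ih0 ih1 =>
    simp only [cost]
    split <;> linarith [hc i]

end DTree

open DTree

variable {p c : Fin n → ℝ}

lemma expCost_nonneg (hp : ∀ i, p i ∈ Set.Icc 0 1) (hc : ∀ i, 0 ≤ c i) (t : DTree n) :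
    0 ≤ expCost p c t :=
  sum_nonneg fun a _ => mul_nonneg (cost_nonneg hc t a) (pr_nonneg hp a)

lemma expCost_node {i : Fin n} {t0 t1 : DTree n} {s : Finset (Fin n)}
    (ht : (node i t0 t1).Proper s) :
    expCost p c (node i t0 t1) = c i + (1 - p i) * expCost p c t0 + p i * expCost p c t1 := by
  have branch : ∀ b : Bool, ∑ a, (node i t0 t1).cost c (update a i b) * pr p a
      = c i + expCost p c (bif b then t1 else t0) := fun b => by
    simp only [cost_branch c ht, add_mul, sum_add_distrib, ← mul_sum, sum_pr, mul_one, expCost]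
  rw [expCost, sum_mul_pr_eq_sum_bitProb_mul p i, Fintype.sum_bool, branch, branch]
  simp only [bitProb, cond_true, cond_false, if_true, Bool.false_eq_true, if_false]
  ring

lemma expCost_node_ge (hp : ∀ i, p i ∈ Set.Icc 0 1) (hc : ∀ i, 0 ≤ c i) {i : Fin n}
    {t0 t1 : DTree n} {s : Finset (Fin n)} (ht : (node i t0 t1).Proper s) (b : Bool) :
    c i + bitProb p i b * expCost p c (bif b then t1 else t0) ≤ expCost p c (node i t0 t1) := by
  have h0 := mul_nonneg (bitProb_nonneg hp i false) (expCost_nonneg hp hc t0)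
  have h1 := mul_nonneg (bitProb_nonneg hp i true) (expCost_nonneg hp hc t1)
  rw [expCost_node ht]
  cases b <;> simp only [bitProb, cond_true, cond_false, if_true, Bool.false_eq_true,
    if_false] at h0 h1 ⊢ <;> linarith

/-- The exchange argument: in a sorted chain, moving any bit `j` to the front does not help. -/
lemma chainCost_le_cons_erase {q : Fin n → ℝ} (hq : ∀ j, 0 ≤ q j) {l : List (Fin n)}
    (hl : l.Pairwise fun x y => c x * (1 - q y) ≤ c y * (1 - q x)) {j : Fin n} (hj : j ∈ l) :
    chainCost c q l ≤ c j + q j * chainCost c q (l.erase j) := by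
  induction l with
  | nil => simp at hj
  | cons x r ih =>
    obtain ⟨hx, hr⟩ := List.pairwise_cons.mp hl
    by_cases hjx : x = j
    · subst hjx
      simp [chainCost]
    · have hjr : j ∈ r := (List.mem_cons.mp hj).resolve_left (Ne.symm hjx)
      rw [List.erase_cons_tail (by simpa using hjx)]
      simp only [chainCost]
      nlinarith [mul_le_mul_of_nonneg_left (ih hr hjr) (hq x), hx j hjr, hq j]

def chainTree (w : ℕ) (b : Bool) : List (Fin n) → DTree n
  | [] => .leaf w
  | j :: l =>
    bif b then .node j (.leaf 1) (chainTree w b l) else .node j (chainTree w b l) (.leaf 1)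

lemma proper_chainTree (w : ℕ) (b : Bool) {l : List (Fin n)} (hl : l.Nodup) {s : Finset (Fin n)}
    (hs : ∀ j ∈ l, j ∉ s) : (chainTree w b l).Proper s := by
  induction l generalizing s with
  | nil => trivial
  | cons j l ih =>
    obtain ⟨hjl, hl⟩ := List.nodup_cons.mp hl
    have hs' : ∀ k ∈ l, k ∉ insert j s := fun k hk => by
      simp only [mem_insert, not_or]
      exact ⟨by rintro rfl; exact hjl hk, hs k (List.mem_cons_of_mem j hk)⟩
    cases b
    · exact ⟨hs j List.mem_cons_self, ih hl hs', trivial⟩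
    · exact ⟨hs j List.mem_cons_self, trivial, ih hl hs'⟩

lemma eval_chainTree (w : ℕ) (b : Bool) (l : List (Fin n)) (a : Fin n → Bool) :
    (chainTree w b l).eval a = if ∀ j ∈ l, a j = b then w else 1 := by
  induction l with
  | nil => simp [chainTree, DTree.eval]
  | cons j l ih =>
    cases b <;> cases h : a j <;> simp [chainTree, DTree.eval, h, ih]

lemma expCost_chainTree (w : ℕ) (b : Bool) {l : List (Fin n)} (hl : l.Nodup) :
    expCost p c (chainTree w b l) = chainCost c (fun j => bitProb p j b) l := by
  induction l with
  | nil => simp [chainTree, expCost, cost, chainCost]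
  | cons j l ih =>
    have hleaf : expCost p c (.leaf 1) = 0 := by simp [expCost, cost]
    have ht := proper_chainTree w b hl (s := ∅) (by simp)
    cases b <;> simp only [chainTree, cond_true, cond_false] at ht ⊢ <;>
      rw [expCost_node ht, hleaf, ih (List.nodup_cons.mp hl).2] <;>
      simp only [chainCost, bitProb, if_true, Bool.false_eq_true, if_false] <;> ring

lemma forall_mem_update_eq_iff {l : List (Fin n)} (hl : l.Nodup) (a : Fin n → Bool) (i : Fin n)
    (b : Bool) : (∀ j ∈ l, update a i b j = b) ↔ ∀ j ∈ l.erase i, a j = b := by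
  simp only [hl.mem_erase_iff, and_imp]
  refine forall_congr' fun j => ?_
  by_cases hji : j = i
  · subst hji; simp
  · simp [hji]

theorem chainCost_le_expCost (hp : ∀ i, p i ∈ Set.Icc 0 1) (hc : ∀ i, 0 ≤ c i) {b : Bool}
    {w : ℕ} (hw : w ≠ 1) {t : DTree n} {s : Finset (Fin n)} (ht : t.Proper s)
    {l : List (Fin n)} (hnd : l.Nodup) (hl : ∀ j ∉ s, j ∈ l)
    (hsort : l.Pairwise fun x y => c x * bitProb p y (!b) ≤ c y * bitProb p x (!b))
    (heval : ∀ a, t.eval a = if ∀ j ∈ l, a j = b then w else 1) :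
    chainCost c (fun j => bitProb p j b) l ≤ expCost p c t := by
  induction t generalizing s l with
  | leaf v =>
    cases l with
    | nil => exact expCost_nonneg hp hc _
    | cons j r =>
      have hall := heval fun _ => b
      have hflip := heval (update (fun _ => b) j (!b))
      simp [DTree.eval] at hall hflip
      omega
  | node i t0 t1 ih0 ih1 =>
    have hi : i ∈ l := hl i ht.1
    have hsort' :
        (l.erase i).Pairwise fun x y => c x * bitProb p y (!b) ≤ c y * bitProb p x (!b) :=
      hsort.sublist (List.erase_sublist)
    have hl' : ∀ j ∉ insert i s, j ∈ l.erase i := fun j hj => by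
      rw [mem_insert, not_or] at hj
      exact (List.mem_erase_of_ne hj.1).mpr (hl j hj.2)
    have heval' : ∀ a, (bif b then t1 else t0).eval a
        = if ∀ j ∈ l.erase i, a j = b then w else 1 := fun a => by
      rw [eval_branch ht, heval]
      exact if_congr (forall_mem_update_eq_iff hnd a i b) rfl rfl
    have ih : chainCost c (fun j => bitProb p j b) (l.erase i)
        ≤ expCost p c (bif b then t1 else t0) := by
      cases b
      · exact ih0 ht.2.1 (hnd.erase i) hl' hsort' heval'
      · exact ih1 ht.2.2 (hnd.erase i) hl' hsort' heval'
    calc chainCost c (fun j => bitProb p j b) l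
        ≤ c i + bitProb p i b * chainCost c (fun j => bitProb p j b) (l.erase i) :=
          chainCost_le_cons_erase (bitProb_nonneg hp · b)
            (by simpa only [one_sub_bitProb] using hsort) hi
      _ ≤ c i + bitProb p i b * expCost p c (bif b then t1 else t0) := by
          gcongr
          exact bitProb_nonneg hp i b
      _ ≤ expCost p c (node i t0 t1) := expCost_node_ge hp hc ht b

lemma uvote_update (a : Fin n → Bool) (i : Fin n) (b : Bool) :
    uvote (update a i b) = if ∀ j ≠ i, a j = b then (bif b then 2 else 0) else 1 := by
  have hall : ∀ b', (∀ j, update a i b j = b') ↔ b = b' ∧ ∀ j ≠ i, a j = b' :=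
    fun b' => forall_update_iff a fun _ x => x = b'
  cases b <;> simp [uvote, hall]

lemma eval_branch_of_eval_uvote {i : Fin n} {t0 t1 : DTree n} {s : Finset (Fin n)}
    (ht : (node i t0 t1).Proper s) (heval : ∀ a, (node i t0 t1).eval a = uvote a)
    {l : List (Fin n)} (hl : ∀ j, j ∈ l ↔ j ≠ i) (b : Bool) (a : Fin n → Bool) :
    (bif b then t1 else t0).eval a = if ∀ j ∈ l, a j = b then (bif b then 2 else 0) else 1 := by
  simp only [eval_branch ht, heval, uvote_update, hl]

def uvoteTree (i : Fin n) (l0 l1 : List (Fin n)) : DTree n :=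
  node i (chainTree 0 false l0) (chainTree 2 true l1)

section UvoteTree

variable {i : Fin n} {l0 l1 : List (Fin n)}

lemma proper_uvoteTree (h0 : l0.Nodup ∧ ∀ j, j ∈ l0 ↔ j ≠ i)
    (h1 : l1.Nodup ∧ ∀ j, j ∈ l1 ↔ j ≠ i) :
    (uvoteTree i l0 l1).Proper ∅ := by
  refine ⟨notMem_empty i, proper_chainTree 0 false h0.1 ?_, proper_chainTree 2 true h1.1 ?_⟩
    <;> simp [h0.2, h1.2]

lemma eval_uvoteTree (h0 : ∀ j, j ∈ l0 ↔ j ≠ i) (h1 : ∀ j, j ∈ l1 ↔ j ≠ i)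
    (a : Fin n → Bool) :
    (uvoteTree i l0 l1).eval a = uvote a := by
  conv_rhs => rw [← update_eq_self i a, uvote_update]
  cases h : a i <;> simp [uvoteTree, DTree.eval, h, eval_chainTree, h0, h1]

lemma expCost_uvoteTree (h0 : l0.Nodup ∧ ∀ j, j ∈ l0 ↔ j ≠ i)
    (h1 : l1.Nodup ∧ ∀ j, j ∈ l1 ↔ j ≠ i) :
    expCost p c (uvoteTree i l0 l1)
      = c i + (1 - p i) * chainCost c (fun j => 1 - p j) l0 + p i * chainCost c p l1 := by
  rw [uvoteTree, expCost_node (proper_uvoteTree h0 h1), expCost_chainTree 0 false h0.1,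
    expCost_chainTree 2 true h1.1]
  rfl

end UvoteTree

theorem uvoteCost_le_expCost (hp : ∀ i, p i ∈ Set.Icc 0 1) (hc : ∀ i, 0 ≤ c i) {i : Fin n}
    {t0 t1 : DTree n} (ht : (node i t0 t1).Proper ∅)
    (heval : ∀ a, (node i t0 t1).eval a = uvote a)
    {l0 l1 : List (Fin n)}
    (h0 : l0.Nodup ∧ (∀ j, j ∈ l0 ↔ j ≠ i) ∧
      l0.Pairwise fun x y => c x * p y ≤ c y * p x)
    (h1 : l1.Nodup ∧ (∀ j, j ∈ l1 ↔ j ≠ i) ∧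
      l1.Pairwise fun x y => c x * (1 - p y) ≤ c y * (1 - p x)) :
    c i + (1 - p i) * chainCost c (fun j => 1 - p j) l0 + p i * chainCost c p l1
      ≤ expCost p c (node i t0 t1) := by
  have hcover :
      ∀ l : List (Fin n), (∀ j, j ∈ l ↔ j ≠ i) → ∀ j ∉ insert i ∅, j ∈ l :=
    fun l hl j hj => (hl j).mpr fun h => hj (mem_insert.mpr (.inl h))
  have hlow0 : chainCost c (fun j => 1 - p j) l0 ≤ expCost p c t0 :=
    chainCost_le_expCost hp hc (b := false) (by decide) ht.2.1 h0.1 (hcover l0 h0.2.1) h0.2.2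
      (eval_branch_of_eval_uvote ht heval h0.2.1 false)
  have hlow1 : chainCost c p l1 ≤ expCost p c t1 :=
    chainCost_le_expCost hp hc (b := true) (by decide) ht.2.2 h1.1 (hcover l1 h1.2.1) h1.2.2
      (eval_branch_of_eval_uvote ht heval h1.2.1 true)
  rw [expCost_node ht]
  have := mul_le_mul_of_nonneg_left hlow0 (sub_nonneg.mpr (hp i).2)
  have := mul_le_mul_of_nonneg_left hlow1 (hp i).1
  linarith

lemma not_eval_leaf_eq_uvote [NeZero n] (v : ℕ) :
    ¬ ∀ a : Fin n → Bool, (leaf v).eval a = uvote a := by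
  intro h
  have h2 := h fun _ => true
  have h0 := h fun _ => false
  simp [DTree.eval, uvote] at h2 h0
  omega

theorem csInf_eq_inf'_of_forall_exists_le {α ι : Type*} [ConditionallyCompleteLinearOrder α]
    {s : Finset ι} (hs : s.Nonempty) (f : ι → α) {S : Set α} (hmem : ∀ i ∈ s, f i ∈ S)
    (hle : ∀ x ∈ S, ∃ i ∈ s, f i ≤ x) : sInf S = s.inf' hs f := by
  refine IsLeast.csInf_eq ⟨?_, fun x hx => ?_⟩
  · obtain ⟨i, hi, heq⟩ := exists_mem_eq_inf' hs f
    exact heq ▸ hmem i hi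
  · obtain ⟨i, hi, hfx⟩ := hle x hx
    exact (inf'_le f hi).trans hfx

theorem stmt12 {n : ℕ} (hn : 2 ≤ n) (p c : Fin n → ℝ)
    (hp : ∀ i, 0 < p i ∧ p i < 1) (hc : ∀ i, 0 < c i)
    (L L' : Fin n → List (Fin n))
    (hL : ∀ i, (L i).Nodup ∧ (∀ j, j ∈ L i ↔ j ≠ i) ∧
      (L i).Pairwise (fun a b => c a / p a ≤ c b / p b))
    (hL' : ∀ i, (L' i).Nodup ∧ (∀ j, j ∈ L' i ↔ j ≠ i) ∧
      (L' i).Pairwise (fun a b => c a / (1 - p a) ≤ c b / (1 - p b))) :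
    OPTcost p c uvote =
      Finset.univ.inf' ⟨⟨0, by omega⟩, Finset.mem_univ _⟩
        (fun i => c i + (1 - p i) * chainCost c (fun j => 1 - p j) (L i)
          + p i * chainCost c p (L' i)) := by
  have : NeZero n := ⟨by omega⟩
  have hp' : ∀ i, p i ∈ Set.Icc 0 1 := fun i => ⟨(hp i).1.le, (hp i).2.le⟩
  have hq : ∀ i, 0 < 1 - p i := fun i => sub_pos.mpr (hp i).2
  have hL0 : ∀ i, (L i).Nodup ∧ (∀ j, j ∈ L i ↔ j ≠ i) ∧
      (L i).Pairwise fun x y => c x * p y ≤ c y * p x := fun i =>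
    ⟨(hL i).1, (hL i).2.1, (hL i).2.2.imp ((div_le_div_iff₀ (hp _).1 (hp _).1).mp ·)⟩
  have hL1 : ∀ i, (L' i).Nodup ∧ (∀ j, j ∈ L' i ↔ j ≠ i) ∧
      (L' i).Pairwise fun x y => c x * (1 - p y) ≤ c y * (1 - p x) := fun i =>
    ⟨(hL' i).1, (hL' i).2.1, (hL' i).2.2.imp ((div_le_div_iff₀ (hq _) (hq _)).mp ·)⟩
  refine csInf_eq_inf'_of_forall_exists_le _ _ (fun i _ => ⟨uvoteTree i (L i) (L' i),
    proper_uvoteTree ⟨(hL i).1, (hL i).2.1⟩ ⟨(hL' i).1, (hL' i).2.1⟩,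
    eval_uvoteTree (hL i).2.1 (hL' i).2.1,
    (expCost_uvoteTree ⟨(hL i).1, (hL i).2.1⟩ ⟨(hL' i).1, (hL' i).2.1⟩).symm⟩) ?_
  rintro _ ⟨T, hT, heval, rfl⟩
  cases T with
  | leaf v => exact absurd heval (not_eval_leaf_eq_uvote v)
  | node i t0 t1 =>
    exact ⟨i, mem_univ i,
      uvoteCost_le_expCost hp' (fun i => (hc i).le) hT heval (hL0 i) (hL1 i)⟩
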